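/- Let X be a Banach space, V ⊂ X an N-dimensional subspace, w ∈ ℓ¹ positive, and for ε ≥ 0 let {T_i^{(ε)}}_{i∈ℕ} ⊂ X' with ‖T_i^{(ε)}‖ ≤ 1 be families converging uniformly to {T_i} as ε → 0, meaning sup_{‖x‖=1} Σ_i |T_i(x) − T_i^{(ε)}(x)| w_i → 0. Suppose {T_i} is determining for V. Then for any fixed basis ϑ₁,…,ϑ_N of V, the Gram matrices G^{(ε)} := [Σ_i w_i T_i^{(ε)}(ϑ_h) T_i^{(ε)}(ϑ_k)]_{h,k} converge entrywise to G := [Σ_i w_i T_i(ϑ_h) T_i(ϑ_k)]_{h,k}, with |G^{(ε)}_{hk} − G_{hk}| ≤ 2‖ϑ_h‖‖ϑ_k‖ · sup_{‖x‖=1} Σ_i |T_i(x) − T_i^{(ε)}(x)| w_i. In particular G^{(ε)} is positive definite for all sufficiently small ε, so {T_i^{(ε)}} is determining for V. -/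

import Mathlib

open scoped BigOperators Topology

/-! The Gram entries are values of the sampled form `⟪x, y⟫_S = ∑ w_i S_i x S_i y`. Writing
`S' x S' y - S x S y = (S' x - S x) S' y + S x (S' y - S y)` bounds the change of this form by
`‖y‖ δ(x) + ‖x‖ δ(y)`, where `δ(x) = ∑ |S_i x - S'_i x| w_i ≤ ‖x‖ D` by homogeneity.
Since `{T_i}` is determining, `⟪v, v⟫_T` is positive on the compact unit sphere of the
finite-dimensional space `V`, so `⟪v, v⟫_T ≥ m ‖v‖²` for some `m > 0`. Once `2 D(ε) < m`, the
perturbed form `⟪v, v⟫_{T^ε}` is still positive on `V ∖ {0}`, which gives both the determining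
property of `{T_i^ε}` and the positive definiteness of `G^ε`. -/

section

open Matrix Metric

variable {ι κ X : Type*} [Fintype κ] [NormedAddCommGroup X] [NormedSpace ℝ X]

noncomputable def gramForm (w : ι → ℝ) (S : ι → X →L[ℝ] ℝ) (x y : X) : ℝ :=
  ∑' i, w i * S i x * S i y

noncomputable def samplingDeviation (w : ι → ℝ) (S S' : ι → X →L[ℝ] ℝ) (x : X) : ℝ :=
  ∑' i, |S i x - S' i x| * w i

variable {w : ι → ℝ} {S S' : ι → X →L[ℝ] ℝ}

lemma abs_apply_le_norm_of_norm_le_one {T : X →L[ℝ] ℝ} (hT : ‖T‖ ≤ 1) (x : X) :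
    |T x| ≤ ‖x‖ := by
  simpa using T.le_of_opNorm_le hT x

lemma summable_mul_apply_mul_apply (hw : ∀ i, 0 ≤ w i) (hw_sum : Summable w)
    (hS : ∀ i, ‖S i‖ ≤ 1) (x y : X) : Summable fun i => w i * S i x * S i y := by
  refine Summable.of_norm_bounded (hw_sum.mul_left (‖x‖ * ‖y‖)) fun i => ?_
  have hx := abs_apply_le_norm_of_norm_le_one (hS i) x
  have hy := abs_apply_le_norm_of_norm_le_one (hS i) y
  rw [Real.norm_eq_abs, abs_mul, abs_mul, abs_of_nonneg (hw i)]
  calc w i * |S i x| * |S i y| ≤ w i * ‖x‖ * ‖y‖ :=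
        mul_le_mul (mul_le_mul_of_nonneg_left hx (hw i)) hy (abs_nonneg _)
          (mul_nonneg (hw i) (norm_nonneg x))
    _ = ‖x‖ * ‖y‖ * w i := by ring

lemma abs_sub_apply_le (hS : ∀ i, ‖S i‖ ≤ 1) (hS' : ∀ i, ‖S' i‖ ≤ 1) (i : ι) (x : X) :
    |S i x - S' i x| ≤ 2 * ‖x‖ := by
  linarith [abs_sub (S i x) (S' i x), abs_apply_le_norm_of_norm_le_one (hS i) x,
    abs_apply_le_norm_of_norm_le_one (hS' i) x]

lemma summable_abs_sub_apply_mul (hw : ∀ i, 0 ≤ w i) (hw_sum : Summable w)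
    (hS : ∀ i, ‖S i‖ ≤ 1) (hS' : ∀ i, ‖S' i‖ ≤ 1) (x : X) :
    Summable fun i => |S i x - S' i x| * w i :=
  (hw_sum.mul_left (2 * ‖x‖)).of_nonneg_of_le (fun i => mul_nonneg (abs_nonneg _) (hw i))
    fun i => mul_le_mul_of_nonneg_right (abs_sub_apply_le hS hS' i x) (hw i)

lemma samplingDeviation_le (hw : ∀ i, 0 ≤ w i) (hw_sum : Summable w)
    (hS : ∀ i, ‖S i‖ ≤ 1) (hS' : ∀ i, ‖S' i‖ ≤ 1) (x : X) :
    samplingDeviation w S S' x ≤ 2 * ‖x‖ * ∑' i, w i := by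
  rw [← tsum_mul_left]
  exact (summable_abs_sub_apply_mul hw hw_sum hS hS' x).tsum_le_tsum
    (fun i => mul_le_mul_of_nonneg_right (abs_sub_apply_le hS hS' i x) (hw i))
    (hw_sum.mul_left _)

lemma samplingDeviation_smul (c : ℝ) (x : X) :
    samplingDeviation w S S' (c • x) = |c| * samplingDeviation w S S' x := by
  simp only [samplingDeviation, map_smul, smul_eq_mul, ← mul_sub, abs_mul, mul_assoc,
    tsum_mul_left]

lemma samplingDeviation_le_norm_mul_sSup (hw : ∀ i, 0 ≤ w i) (hw_sum : Summable w)
    (hS : ∀ i, ‖S i‖ ≤ 1) (hS' : ∀ i, ‖S' i‖ ≤ 1) (x : X) :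
    samplingDeviation w S S' x ≤
      ‖x‖ * sSup {c | ∃ x : X, ‖x‖ = 1 ∧ c = samplingDeviation w S S' x} := by
  rcases eq_or_ne x 0 with rfl | hx
  · simp [samplingDeviation]
  have hbdd : BddAbove {c | ∃ x : X, ‖x‖ = 1 ∧ c = samplingDeviation w S S' x} := by
    refine ⟨2 * ∑' i, w i, ?_⟩
    rintro _ ⟨u, hu, rfl⟩
    simpa [hu] using samplingDeviation_le hw hw_sum hS hS' u
  have hunit := norm_smul_inv_norm (𝕜 := ℝ) hx
  calc samplingDeviation w S S' x
      = ‖x‖ * samplingDeviation w S S' ((‖x‖ : ℝ)⁻¹ • x) := by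
        rw [samplingDeviation_smul, abs_inv, abs_norm,
          mul_inv_cancel_left₀ (norm_ne_zero_iff.mpr hx)]
    _ ≤ _ := by
        gcongr
        exact le_csSup hbdd ⟨_, hunit, rfl⟩

lemma abs_gramForm_sub_le (hw : ∀ i, 0 ≤ w i) (hw_sum : Summable w)
    (hS : ∀ i, ‖S i‖ ≤ 1) (hS' : ∀ i, ‖S' i‖ ≤ 1) (x y : X) :
    |gramForm w S' x y - gramForm w S x y| ≤
      ‖y‖ * samplingDeviation w S S' x + ‖x‖ * samplingDeviation w S S' y := by
  rw [gramForm, gramForm, ← (summable_mul_apply_mul_apply hw hw_sum hS' x y).tsum_sub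
    (summable_mul_apply_mul_apply hw hw_sum hS x y), ← Real.norm_eq_abs]
  refine tsum_of_norm_bounded
    (((summable_abs_sub_apply_mul hw hw_sum hS hS' x).hasSum.mul_left ‖y‖).add
      ((summable_abs_sub_apply_mul hw hw_sum hS hS' y).hasSum.mul_left ‖x‖)) fun i => ?_
  have hx := abs_apply_le_norm_of_norm_le_one (hS i) x
  have hy := abs_apply_le_norm_of_norm_le_one (hS' i) y
  have hwi := hw i
  calc ‖w i * S' i x * S' i y - w i * S i x * S i y‖
      = |w i * ((S' i x - S i x) * S' i y) + w i * (S i x * (S' i y - S i y))| := by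
        rw [Real.norm_eq_abs]; congr 1; ring
    _ ≤ w i * (|S i x - S' i x| * |S' i y|) + w i * (|S i x| * |S i y - S' i y|) := by
        refine (abs_add_le _ _).trans_eq ?_
        rw [abs_mul, abs_mul, abs_mul, abs_mul, abs_of_nonneg hwi, abs_sub_comm (S' i x),
          abs_sub_comm (S' i y)]
    _ ≤ w i * (|S i x - S' i x| * ‖y‖) + w i * (‖x‖ * |S i y - S' i y|) := by gcongr
    _ = ‖y‖ * (|S i x - S' i x| * w i) + ‖x‖ * (|S i y - S' i y| * w i) := by ring

lemma abs_gramForm_sub_le_sSup (hw : ∀ i, 0 ≤ w i) (hw_sum : Summable w)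
    (hS : ∀ i, ‖S i‖ ≤ 1) (hS' : ∀ i, ‖S' i‖ ≤ 1) (x y : X) :
    |gramForm w S' x y - gramForm w S x y| ≤
      2 * ‖x‖ * ‖y‖ * sSup {c | ∃ x : X, ‖x‖ = 1 ∧ c = samplingDeviation w S S' x} := by
  have hx := mul_le_mul_of_nonneg_left
    (samplingDeviation_le_norm_mul_sSup hw hw_sum hS hS' x) (norm_nonneg y)
  have hy := mul_le_mul_of_nonneg_left
    (samplingDeviation_le_norm_mul_sSup hw hw_sum hS hS' y) (norm_nonneg x)
  linarith [abs_gramForm_sub_le hw hw_sum hS hS' x y]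

lemma gramForm_smul_self (c : ℝ) (x : X) :
    gramForm w S (c • x) (c • x) = c ^ 2 * gramForm w S x x := by
  simp only [gramForm, map_smul, smul_eq_mul, ← tsum_mul_left]
  exact tsum_congr fun i => by ring

lemma gramForm_self_pos (hw : ∀ i, 0 < w i) (hw_sum : Summable w) (hS : ∀ i, ‖S i‖ ≤ 1)
    {x : X} (hx : ∃ i, S i x ≠ 0) : 0 < gramForm w S x x := by
  obtain ⟨i, hi⟩ := hx
  exact (summable_mul_apply_mul_apply (fun i => (hw i).le) hw_sum hS x x).tsum_pos
    (fun j => by rw [mul_assoc]; exact mul_nonneg (hw j).le (mul_self_nonneg _)) i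
    (by rw [mul_assoc]; exact mul_pos (hw i) (mul_self_pos.mpr hi))

lemma exists_pos_mul_norm_sq_le_gramForm (V : Submodule ℝ X) [FiniteDimensional ℝ V]
    (hw : ∀ i, 0 < w i) (hw_sum : Summable w) (hS : ∀ i, ‖S i‖ ≤ 1)
    (hdet : ∀ v ∈ V, (∀ i, S i v = 0) → v = 0) :
    ∃ m > 0, ∀ v ∈ V, m * ‖v‖ ^ 2 ≤ gramForm w S v v := by
  rcases subsingleton_or_nontrivial V with hV | hV
  · refine ⟨1, one_pos, fun v hv => ?_⟩
    obtain rfl : v = 0 := congrArg Subtype.val (Subsingleton.elim (⟨v, hv⟩ : V) 0)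
    simp [gramForm]
  have hcont : ContinuousOn (fun v : V => gramForm w S v v) (sphere 0 1) := by
    refine continuousOn_tsum (fun i => by fun_prop) hw_sum fun i v hv => ?_
    have hv1 : ‖(v : X)‖ = 1 := by simpa using hv
    have hSv := abs_apply_le_norm_of_norm_le_one (hS i) v
    rw [hv1] at hSv
    have hSv_sq : S i v * S i v ≤ 1 := by
      rw [← abs_mul_abs_self]; nlinarith [abs_nonneg (S i v)]
    rw [Real.norm_eq_abs, mul_assoc, abs_mul, abs_of_pos (hw i), abs_mul_self]
    exact mul_le_of_le_one_right (hw i).le hSv_sq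
  obtain ⟨u, hu, hmin⟩ := (isCompact_sphere (0 : V) 1).exists_isMinOn
    (NormedSpace.sphere_nonempty.mpr zero_le_one) hcont
  have hu0 : (u : X) ≠ 0 := by simpa using ne_zero_of_mem_unit_sphere ⟨u, hu⟩
  refine ⟨gramForm w S u u, gramForm_self_pos hw hw_sum hS ?_, fun v hv => ?_⟩
  · by_contra! h
    exact hu0 (hdet u u.2 h)
  rcases eq_or_ne v 0 with rfl | hv0
  · simp [gramForm]
  have hunit : (⟨‖v‖⁻¹ • v, V.smul_mem _ hv⟩ : V) ∈ sphere 0 1 := by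
    simpa using norm_smul_inv_norm (𝕜 := ℝ) hv0
  calc gramForm w S u u * ‖v‖ ^ 2 ≤ gramForm w S (‖v‖⁻¹ • v) (‖v‖⁻¹ • v) * ‖v‖ ^ 2 := by
        gcongr; exact hmin hunit
    _ = gramForm w S v v := by
        have : ‖v‖ ≠ 0 := norm_ne_zero_iff.mpr hv0
        rw [gramForm_smul_self]; field_simp

lemma dotProduct_mulVec_gramForm (hw : ∀ i, 0 ≤ w i) (hw_sum : Summable w)
    (hS : ∀ i, ‖S i‖ ≤ 1) (u : κ → X) (c : κ → ℝ) :
    c ⬝ᵥ (of fun h k => gramForm w S (u h) (u k)) *ᵥ c =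
      gramForm w S (∑ h, c h • u h) (∑ h, c h • u h) := by
  have hsum : ∀ h k, Summable fun i => c h * (w i * S i (u h) * S i (u k) * c k) := fun h k =>
    ((summable_mul_apply_mul_apply hw hw_sum hS (u h) (u k)).mul_right (c k)).mul_left (c h)
  calc c ⬝ᵥ (of fun h k => gramForm w S (u h) (u k)) *ᵥ c
      = ∑ h, ∑ k, ∑' i, c h * (w i * S i (u h) * S i (u k) * c k) := by
        simp only [dotProduct, mulVec, of_apply, Finset.mul_sum, gramForm, tsum_mul_left,
          tsum_mul_right]
    _ = ∑' i, ∑ h, ∑ k, c h * (w i * S i (u h) * S i (u k) * c k) := by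
        rw [Summable.tsum_finsetSum fun h _ => summable_sum fun k _ => hsum h k]
        exact Finset.sum_congr rfl fun h _ => (Summable.tsum_finsetSum fun k _ => hsum h k).symm
    _ = gramForm w S (∑ h, c h • u h) (∑ h, c h • u h) := by
        refine tsum_congr fun i => ?_
        simp only [map_sum, map_smul, smul_eq_mul, Finset.mul_sum, Finset.sum_mul]
        exact Finset.sum_congr rfl fun h _ => Finset.sum_congr rfl fun k _ => by ring

lemma posDef_gramForm (hw : ∀ i, 0 ≤ w i) (hw_sum : Summable w) (hS : ∀ i, ‖S i‖ ≤ 1)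
    {u : κ → X} (hu : LinearIndependent ℝ u)
    (hpos : ∀ x ∈ Submodule.span ℝ (Set.range u), x ≠ 0 → 0 < gramForm w S x x) :
    (of fun h k => gramForm w S (u h) (u k)).PosDef := by
  refine .of_dotProduct_mulVec_pos (.ext fun h k => ?_) fun c hc => ?_
  · simp only [of_apply, star_trivial, gramForm]
    exact tsum_congr fun i => by ring
  rw [star_trivial, dotProduct_mulVec_gramForm hw hw_sum hS]
  refine hpos _ (Submodule.sum_mem _ fun h _ =>
    Submodule.smul_mem _ _ (Submodule.subset_span ⟨h, rfl⟩)) fun h0 => ?_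
  exact hc (funext (Fintype.linearIndependent_iff.mp hu c h0))

end

theorem gram_matrix_convergence_of_uniform_convergence_general
    (X : Type*) [NormedAddCommGroup X] [NormedSpace ℝ X]
    (V : Subspace ℝ X) (N : ℕ) (ϑ : Module.Basis (Fin N) ℝ V)
    (w : ℕ → ℝ) (hw_pos : ∀ i, 0 < w i) (hw_sum : Summable w)
    (T : ℕ → (X →L[ℝ] ℝ)) (hT : ∀ i, ‖T i‖ ≤ 1)
    (hdet : ∀ v ∈ V, (∀ i, T i v = 0) → v = 0)
    (Tε : ℝ → ℕ → (X →L[ℝ] ℝ)) (hTε : ∀ ε i, ‖Tε ε i‖ ≤ 1)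
    (D : ℝ → ℝ)
    (hD : ∀ ε, D ε =
      sSup {c : ℝ | ∃ x : X, ‖x‖ = 1 ∧ c = ∑' i, |T i x - Tε ε i x| * w i})
    (hconv : Filter.Tendsto D (𝓝[>] 0) (𝓝 0))
    (G Gε : ℝ → Matrix (Fin N) (Fin N) ℝ)
    (hG : ∀ ε h k, G ε h k = ∑' i, w i * T i (ϑ h : X) * T i (ϑ k : X))
    (hGε : ∀ ε h k, Gε ε h k = ∑' i, w i * Tε ε i (ϑ h : X) * Tε ε i (ϑ k : X)) :
    (∀ ε > (0:ℝ), ∀ h k,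
      |Gε ε h k - G ε h k| ≤ 2 * ‖(ϑ h : X)‖ * ‖(ϑ k : X)‖ * D ε) ∧
    (∀ h k, Filter.Tendsto (fun ε => Gε ε h k) (𝓝[>] 0) (𝓝 (G 0 h k))) ∧
    (∃ ε₀ > (0:ℝ), ∀ ε, 0 < ε → ε < ε₀ →
      (Gε ε).PosDef ∧ ∀ v ∈ V, (∀ i, Tε ε i v = 0) → v = 0) := by
  have hw : ∀ i, 0 ≤ w i := fun i => (hw_pos i).le
  have hgram_sub (ε : ℝ) (x y : X) :
      |gramForm w (Tε ε) x y - gramForm w T x y| ≤ 2 * ‖x‖ * ‖y‖ * D ε := by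
    rw [hD]; exact abs_gramForm_sub_le_sSup hw hw_sum hT (hTε ε) x y
  have hbound (ε : ℝ) (h k : Fin N) :
      |Gε ε h k - G 0 h k| ≤ 2 * ‖(ϑ h : X)‖ * ‖(ϑ k : X)‖ * D ε := by
    rw [hGε, hG]; exact hgram_sub ε _ _
  refine ⟨fun ε _ h k => by rw [hG ε, ← hG 0]; exact hbound ε h k, fun h k => ?_, ?_⟩
  · have hlim := hconv.const_mul (2 * ‖(ϑ h : X)‖ * ‖(ϑ k : X)‖)
    rw [mul_zero] at hlim
    exact tendsto_iff_norm_sub_tendsto_zero.mpr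
      (squeeze_zero (fun _ => norm_nonneg _) (fun ε => hbound ε h k) hlim)
  have := Module.Finite.of_basis ϑ
  obtain ⟨m, hm, hcoercive⟩ := exists_pos_mul_norm_sq_le_gramForm V hw_pos hw_sum hT hdet
  obtain ⟨ε₀, hε₀, hsmall⟩ :=
    mem_nhdsGT_iff_exists_Ioo_subset.mp (hconv.eventually_lt_const (half_pos hm))
  refine ⟨ε₀, hε₀, fun ε hε hεε₀ => ?_⟩
  have hDε : D ε < m / 2 := hsmall ⟨hε, hεε₀⟩
  have hpos : ∀ v ∈ V, v ≠ 0 → 0 < gramForm w (Tε ε) v v := fun v hv hv0 => by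
    have hgap : 0 < (m - 2 * D ε) * ‖v‖ ^ 2 :=
      mul_pos (by linarith) (pow_pos (norm_pos_iff.mpr hv0) 2)
    nlinarith [(abs_le.mp (hgram_sub ε v v)).1, hcoercive v hv]
  refine ⟨?_, fun v hv hTv => by_contra fun hv0 => (hpos v hv hv0).ne' (by simp [gramForm, hTv])⟩
  rw [show Gε ε = Matrix.of fun h k => gramForm w (Tε ε) (ϑ h) (ϑ k) from Matrix.ext (hGε ε)]
  exact posDef_gramForm hw hw_sum (hTε ε) (ϑ.linearIndependent.map' V.subtype V.ker_subtype)
    fun x hx => hpos x (Submodule.span_le.mpr (Set.range_subset_iff.mpr fun h => (ϑ h).2) hx)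

/-- Uniform convergence of the sampling families implies entrywise convergence of the
Gram matrices, with the explicit bound
`|G^{(ε)}_{hk} − G_{hk}| ≤ 2‖ϑ_h‖‖ϑ_k‖ · sup_{‖x‖=1} Σ_i |T_i(x) − T_i^{(ε)}(x)| w_i`;
hence `G^{(ε)}` is positive definite and `{T_i^{(ε)}}` is determining for small `ε`. -/
theorem gram_matrix_convergence_of_uniform_convergence
    (X : Type*) [NormedAddCommGroup X] [NormedSpace ℝ X] [CompleteSpace X]
    (V : Subspace ℝ X) (N : ℕ) (hN : 0 < N) (ϑ : Module.Basis (Fin N) ℝ V)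
    (w : ℕ → ℝ) (hw_pos : ∀ i, 0 < w i) (hw_sum : Summable w)
    (T : ℕ → (X →L[ℝ] ℝ)) (hT : ∀ i, ‖T i‖ ≤ 1)
    (hdet : ∀ v ∈ V, (∀ i, T i v = 0) → v = 0)
    (Tε : ℝ → ℕ → (X →L[ℝ] ℝ)) (hTε : ∀ ε i, ‖Tε ε i‖ ≤ 1)
    (D : ℝ → ℝ)
    (hD : ∀ ε, D ε =
      sSup {c : ℝ | ∃ x : X, ‖x‖ = 1 ∧ c = ∑' i, |T i x - Tε ε i x| * w i})
    (hconv : Filter.Tendsto D (𝓝[>] 0) (𝓝 0))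
    (G Gε : ℝ → Matrix (Fin N) (Fin N) ℝ)
    (hG : ∀ ε h k, G ε h k = ∑' i, w i * T i (ϑ h : X) * T i (ϑ k : X))
    (hGε : ∀ ε h k, Gε ε h k = ∑' i, w i * Tε ε i (ϑ h : X) * Tε ε i (ϑ k : X)) :
    (∀ ε > (0:ℝ), ∀ h k,
      |Gε ε h k - G ε h k| ≤ 2 * ‖(ϑ h : X)‖ * ‖(ϑ k : X)‖ * D ε) ∧
    (∀ h k, Filter.Tendsto (fun ε => Gε ε h k) (𝓝[>] 0) (𝓝 (G 0 h k))) ∧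
    (∃ ε₀ > (0:ℝ), ∀ ε, 0 < ε → ε < ε₀ →
      (Gε ε).PosDef ∧ ∀ v ∈ V, (∀ i, Tε ε i v = 0) → v = 0) :=
  gram_matrix_convergence_of_uniform_convergence_general X V N ϑ w hw_pos hw_sum T hT hdet Tε hTε D
    hD hconv G Gε hG hGε
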